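/- Let P ⊂ ℝ³ be a lattice polytope. Then: (1) there exists an affine unimodular transformation T of ℝ³ such that T(P) ⊆ [0, w(P)] × [0, w₂(P)] × [0, ls_□(P)]; and (2) for any integers a ≤ b ≤ c such that T(P) ⊆ [0,a] × [0,b] × [0,c] for some affine unimodular transformation T, one has w(P) ≤ a, w₂(P) ≤ b and ls_□(P) ≤ c. -/

import Mathlib

/-- The lattice polytope determined by a nonempty finite set `V` of lattice points:
the convex hull in `ℝ³` of the corresponding real points. -/
def latticePoly3 (V : Finset (Fin 3 → ℤ)) : Set (Fin 3 → ℝ) :=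
  convexHull ℝ ((fun v : Fin 3 → ℤ => fun i => (v i : ℝ)) '' (V : Set (Fin 3 → ℤ)))

/-- `Δ_P(a₀·x + a₁·y + a₂·z) = w_a(P)`, the lattice width of `P ⊆ ℝ³` in direction
`a ∈ ℤ³`: the sup minus the inf of the linear form `p ↦ a·p` over `P`. -/
noncomputable def width3 (P : Set (Fin 3 → ℝ)) (a : Fin 3 → ℤ) : ℝ :=
  sSup ((fun p => ∑ i, (a i : ℝ) * p i) '' P) - sInf ((fun p => ∑ i, (a i : ℝ) * p i) '' P)

/-- `T(P) ⊆ [0,l]³` for some affine unimodular transformation `T : p ↦ A·p + v`. -/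
def FitsInCube3 (P : Set (Fin 3 → ℝ)) (l : ℤ) : Prop :=
  ∃ (A : Matrix (Fin 3) (Fin 3) ℤ) (v : Fin 3 → ℤ),
    (A.det = 1 ∨ A.det = -1) ∧
    ∀ p ∈ P, ∀ i, ((A.map (fun z : ℤ => (z : ℝ))).mulVec p + fun j => (v j : ℝ)) i ∈
      Set.Icc (0 : ℝ) (l : ℝ)

/-- The set of lattice widths of `P` in all primitive directions `a ∈ ℤ³`. -/
def widthSet3 (P : Set (Fin 3 → ℝ)) : Set ℝ :=
  {w | ∃ a : Fin 3 → ℤ, Int.gcd (a 0) (Int.gcd (a 1) (a 2)) = 1 ∧ width3 P a = w}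

/-- Membership in the set `S` of Definition 3.5 (for parameters `l₁ ≤ l₂ ≤ l`):
`(a,b) ∈ S` iff (1) `|a| ≥ |b|` implies `|b| ≤ (2l−1)/l₂` and `|a| ≤ (2l−1+|b|·l₂)/l₁`,
and (2) `|b| ≥ |a|` implies `|a| ≤ (2l−1)/l₁` and `|b| ≤ (2l−1+|a|·l₁)/l₂`. -/
def MemS (l₁ l₂ l a b : ℤ) : Prop :=
  (|b| ≤ |a| → ((|b| : ℝ) ≤ (2 * (l : ℝ) - 1) / (l₂ : ℝ) ∧
    (|a| : ℝ) ≤ (2 * (l : ℝ) - 1 + (|b| : ℝ) * (l₂ : ℝ)) / (l₁ : ℝ))) ∧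
  (|a| ≤ |b| → ((|a| : ℝ) ≤ (2 * (l : ℝ) - 1) / (l₁ : ℝ) ∧
    (|b| : ℝ) ≤ (2 * (l : ℝ) - 1 + (|a| : ℝ) * (l₁ : ℝ)) / (l₂ : ℝ)))

/-- `T(P) ⊆ [0,a] × [0,b] × [0,c]` for some affine unimodular `T : p ↦ A·p + v`. -/
def FitsInBox3 (P : Set (Fin 3 → ℝ)) (a b c : ℤ) : Prop :=
  ∃ (A : Matrix (Fin 3) (Fin 3) ℤ) (v : Fin 3 → ℤ),
    (A.det = 1 ∨ A.det = -1) ∧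
    ∀ p ∈ P, ((A.map (fun z : ℤ => (z : ℝ))).mulVec p + fun j => (v j : ℝ)) 0 ∈
        Set.Icc (0 : ℝ) (a : ℝ) ∧
      ((A.map (fun z : ℤ => (z : ℝ))).mulVec p + fun j => (v j : ℝ)) 1 ∈
        Set.Icc (0 : ℝ) (b : ℝ) ∧
      ((A.map (fun z : ℤ => (z : ℝ))).mulVec p + fun j => (v j : ℝ)) 2 ∈
        Set.Icc (0 : ℝ) (c : ℝ)

/-- `T(P) ⊆ [0,k] × [0,k] × ℝ` for some affine unimodular `T : p ↦ A·p + v`. -/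
def FitsInSlab3 (P : Set (Fin 3 → ℝ)) (k : ℤ) : Prop :=
  ∃ (A : Matrix (Fin 3) (Fin 3) ℤ) (v : Fin 3 → ℤ),
    (A.det = 1 ∨ A.det = -1) ∧
    ∀ p ∈ P, ((A.map (fun z : ℤ => (z : ℝ))).mulVec p + fun j => (v j : ℝ)) 0 ∈
        Set.Icc (0 : ℝ) (k : ℝ) ∧
      ((A.map (fun z : ℤ => (z : ℝ))).mulVec p + fun j => (v j : ℝ)) 1 ∈
        Set.Icc (0 : ℝ) (k : ℝ)

/-!
Write `N a = w_a(P)`; for a lattice polytope this is an integer-valued seminorm on `ℤ³`, and `P`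
fits in `[0,a] × [0,b] × [0,c]` exactly when some unimodular matrix has rows of widths at most
`a`, `b`, `c`. Part (2) is then monotonicity of the three minima. For part (1) take a primitive
`a₀` with `N a₀ = w`. A unimodular basis realising `w₂` has one of its first two rows `s ∉ ℤ a₀`;
modulo `ℤ a₀` it is `k b` with `a₀ ⨯₃ b` primitive, and shifting `b` by the nearest multiple of
`a₀` gives `k N(b) ≤ N(s) + (k/2) N(a₀)`, so `N(b) ≤ w₂`. A unimodular basis realising `ls` has a
row `g` whose level `λ = (a₀ ⨯₃ b) ⬝ᵥ g` is odd; reducing `g` modulo `ℤ a₀ + ℤ b` with both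
remainders at most `(|λ| - 1)/2` yields `t` of level `1` with `|λ| N(t) ≤ |λ| ls`; the oddness is
what keeps the two remainders from adding up to more than `(|λ| - 1) ls`.
-/

open scoped Matrix

theorem Int.exists_eq_mul_add_two_mul_abs_le (c : ℤ) {k : ℤ} (hk : 0 < k) :
    ∃ q r, c = k * q + r ∧ 2 * |r| ≤ k ∧ (Odd k → 2 * |r| < k) := by
  have hk' : 0 < k.toNat := by omega
  have h₁ := Int.le_bmod (x := c) hk'
  have h₂ := Int.bmod_lt (x := c) hk'
  refine ⟨c.bdiv k.toNat, c.bmod k.toNat, ?_, ?_⟩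
  · have := c.bdiv_add_bmod k.toNat
    rw [Int.toNat_of_nonneg hk.le] at this
    exact this.symm
  · rw [Int.toNat_of_nonneg hk.le] at h₁ h₂
    rcases abs_cases (c.bmod k.toNat) with ⟨h, -⟩ | ⟨h, -⟩ <;> rw [h] <;>
      exact ⟨by omega, fun ⟨j, hj⟩ => by omega⟩

def IsPrimitive {ι : Type*} [Fintype ι] (a : ι → ℤ) : Prop := Finset.univ.gcd a = 1

section Primitive
variable {ι : Type*} [Fintype ι]

theorem isPrimitive_iff_exists_dotProduct_eq_one {a : ι → ℤ} :
    IsPrimitive a ↔ ∃ φ : ι → ℤ, a ⬝ᵥ φ = 1 := by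
  constructor
  · intro ha
    obtain ⟨φ, hφ⟩ := Finset.univ.gcd_eq_sum_mul a
    exact ⟨φ, by rw [dotProduct, ← hφ, ha]⟩
  · rintro ⟨φ, hφ⟩
    have hdvd : Finset.univ.gcd a ∣ 1 :=
      hφ ▸ Finset.dvd_sum fun i _ => (Finset.gcd_dvd (Finset.mem_univ i)).mul_right _
    exact Int.eq_one_of_dvd_one (Int.nonneg_of_normalize_eq_self Finset.normalize_gcd) hdvd

theorem exists_eq_smul_isPrimitive [Nonempty ι] (a : ι → ℤ) :
    ∃ a' : ι → ℤ, IsPrimitive a' ∧ a = Finset.univ.gcd a • a' := by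
  obtain ⟨a', ha', h⟩ := Finset.univ.extract_gcd a Finset.univ_nonempty
  exact ⟨a', h, funext fun i => ha' i (Finset.mem_univ i)⟩

theorem isPrimitive_iff_int_gcd (a : Fin 3 → ℤ) :
    IsPrimitive a ↔ Int.gcd (a 0) (Int.gcd (a 1) (a 2)) = 1 := by
  simp [IsPrimitive, Finset.gcd_def, Fin.univ_succ, ← Int.coe_gcd, ← Int.abs_eq_normalize,
    Int.gcd_eq_natAbs, Int.natAbs_abs]

theorem isPrimitive_row_of_isUnit_det [DecidableEq ι] {A : Matrix ι ι ℤ} (hA : IsUnit A.det)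
    (i : ι) : IsPrimitive (A i) :=
  isPrimitive_iff_exists_dotProduct_eq_one.2 ⟨fun j => A⁻¹ j i, by
    simpa [Matrix.mul_apply, dotProduct] using congrFun₂ (A.mul_nonsing_inv hA) i i⟩

theorem exists_odd_dotProduct_row_of_isUnit_det [DecidableEq ι] {A : Matrix ι ι ℤ}
    (hA : IsUnit A.det) {n : ι → ℤ} (hn : IsPrimitive n) : ∃ i, Odd (n ⬝ᵥ A i) := by
  obtain ⟨t, ht⟩ := isPrimitive_iff_exists_dotProduct_eq_one.1 hn
  obtain ⟨c, rfl⟩ := Matrix.vecMul_surjective_iff_isUnit.2 ((A.isUnit_iff_isUnit_det).2 hA) t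
  by_contra! h
  rw [dotProduct_comm, ← Matrix.dotProduct_mulVec] at ht
  have : Even (c ⬝ᵥ A *ᵥ n) := Finset.even_sum _ fun i _ =>
    (by simpa [dotProduct_comm] using h i : Even (A i ⬝ᵥ n)).mul_left _
  exact Int.not_even_one (ht ▸ this)

end Primitive

section Cross
variable {R : Type*} [CommRing R]

theorem cross_dotProduct (u v w : Fin 3 → R) : u ⨯₃ v ⬝ᵥ w = u ⬝ᵥ v ⨯₃ w := by
  rw [dotProduct_comm, triple_product_permutation]

theorem eq_smul_of_cross_eq_zero {a φ x : Fin 3 → R} (hφ : a ⬝ᵥ φ = 1) (h : a ⨯₃ x = 0) :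
    x = (φ ⬝ᵥ x) • a := by
  have := cross_cross_eq_smul_sub_smul' φ a x
  rw [h, hφ, one_smul, map_zero, eq_comm, sub_eq_zero] at this
  exact this.symm

/-- Cramer's rule for the basis `u, v, w`, in triple-product form. -/
theorem smul_eq_cross_dotProduct_smul_add (u v w x : Fin 3 → R) :
    (u ⨯₃ v ⬝ᵥ w) • x = (x ⨯₃ v ⬝ᵥ w) • u + (u ⨯₃ x ⬝ᵥ w) • v + (u ⨯₃ v ⬝ᵥ x) • w := by
  ext i
  fin_cases i <;> simp [cross_apply, dotProduct, Fin.sum_univ_three] <;> ring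

theorem cross_row_ne_zero_of_isUnit_det [Nontrivial R] {A : Matrix (Fin 3) (Fin 3) R}
    (hA : IsUnit A.det) {a φ : Fin 3 → R} (hφ : a ⬝ᵥ φ = 1) : a ⨯₃ A 0 ≠ 0 ∨ a ⨯₃ A 1 ≠ 0 := by
  by_contra! h
  have hA' : A.det = A 0 ⨯₃ A 1 ⬝ᵥ A 2 := by
    rw [cross_dotProduct, triple_product_eq_det]
    congr
    ext i j; fin_cases i <;> rfl
  rw [hA', eq_smul_of_cross_eq_zero hφ h.1, eq_smul_of_cross_eq_zero hφ h.2] at hA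
  simp at hA

end Cross

structure IsIntSeminorm {M : Type*} [AddCommGroup M] (N : M → ℤ) : Prop where
  add_le : ∀ x y, N (x + y) ≤ N x + N y
  smul_eq : ∀ (k : ℤ) x, N (k • x) = |k| * N x

namespace IsIntSeminorm

section
variable {M : Type*} [AddCommGroup M] {N : M → ℤ}

theorem nonneg (hN : IsIntSeminorm N) (x : M) : 0 ≤ N x := by
  have h0 : N 0 = 0 := by simpa using hN.smul_eq 0 x
  have := hN.add_le x ((-1 : ℤ) • x)
  rw [hN.smul_eq, neg_one_smul, add_neg_cancel, h0, abs_neg, abs_one, one_mul] at this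
  linarith

theorem neg (hN : IsIntSeminorm N) (x : M) : N (-x) = N x := by
  simpa using hN.smul_eq (-1) x

theorem sub_smul_le (hN : IsIntSeminorm N) (x y : M) (c : ℤ) :
    N (x - c • y) ≤ N x + |c| * N y := by
  have := hN.add_le x (-c • y)
  rwa [hN.smul_eq, abs_neg, neg_smul, ← sub_eq_add_neg] at this

end

section Fin3
variable {N : (Fin 3 → ℤ) → ℤ}

theorem exists_isPrimitive_cross_le_of_cross_ne_zero (hN : IsIntSeminorm N) {a s : Fin 3 → ℤ}
    {m : ℤ} (ha : IsPrimitive a) (hs : a ⨯₃ s ≠ 0) (hNa : N a ≤ m) (hNs : N s ≤ m) :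
    ∃ b, IsPrimitive (a ⨯₃ b) ∧ N b ≤ m := by
  obtain ⟨φ, hφ⟩ := isPrimitive_iff_exists_dotProduct_eq_one.1 ha
  obtain ⟨n, hn, hsn⟩ := exists_eq_smul_isPrimitive (a ⨯₃ s)
  set k := Finset.univ.gcd (a ⨯₃ s)
  have hk : 0 < k := lt_of_le_of_ne (Int.nonneg_of_normalize_eq_self Finset.normalize_gcd)
    (fun h => hs (by rw [hsn, ← h, zero_smul]))
  obtain ⟨q, r, hqr, hr, -⟩ := Int.exists_eq_mul_add_two_mul_abs_le (φ ⬝ᵥ s) hk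
  -- `φ ⨯₃ (a ⨯₃ s) = (φ ⬝ᵥ s) • a - s`, so `s ≡ -k • (φ ⨯₃ n)` modulo `ℤ a`
  have hkb : k • (q • a - φ ⨯₃ n) = s - r • a := by
    have := cross_cross_eq_smul_sub_smul' φ a s
    rw [hsn, map_smul, hφ, one_smul, hqr] at this
    rw [smul_sub, this]
    module
  refine ⟨q • a - φ ⨯₃ n, ?_, ?_⟩
  · have : k • a ⨯₃ (q • a - φ ⨯₃ n) = k • n := by
      rw [← map_smul, hkb, map_sub, map_smul, cross_self, smul_zero, sub_zero, ← hsn]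
    rwa [smul_right_injective _ hk.ne' this]
  · have h := hN.sub_smul_le s a r
    rw [← hkb, hN.smul_eq, abs_of_pos hk] at h
    have hNb := hN.nonneg (q • a - φ ⨯₃ n)
    have hm := (hN.nonneg a).trans hNa
    have : k * N (q • a - φ ⨯₃ n) ≤ k * m := by
      rcases eq_or_ne r 0 with rfl | hr0
      · simp only [abs_zero, zero_mul, add_zero] at h
        nlinarith
      · nlinarith [abs_pos.2 hr0]
    exact le_of_mul_le_mul_left this hk

theorem exists_cross_dotProduct_eq_one_le_of_odd (hN : IsIntSeminorm N)
    {a b g : Fin 3 → ℤ} {m : ℤ} (hab : IsPrimitive (a ⨯₃ b)) (hg : Odd (a ⨯₃ b ⬝ᵥ g))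
    (hNa : N a ≤ m) (hNb : N b ≤ m) (hNg : N g ≤ m) :
    ∃ t, a ⨯₃ b ⬝ᵥ t = 1 ∧ N t ≤ m := by
  wlog hpos : 0 < a ⨯₃ b ⬝ᵥ g generalizing g
  · refine this (g := -g) (by simpa using hg.neg) (by rwa [hN.neg]) ?_
    obtain ⟨j, hj⟩ := hg
    rw [dotProduct_neg]
    omega
  obtain ⟨t₀, ht₀⟩ := isPrimitive_iff_exists_dotProduct_eq_one.1 hab
  set l := a ⨯₃ b ⬝ᵥ g
  -- `g - l • t₀` has level `0`, so Cramer's rule expresses it in terms of `a` and `b` alone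
  have hG := smul_eq_cross_dotProduct_smul_add a b t₀ (g - l • t₀)
  rw [ht₀, one_smul, dotProduct_sub, dotProduct_smul, ht₀, smul_eq_mul, mul_one, sub_self,
    zero_smul, add_zero] at hG
  obtain ⟨q₁, r₁, h₁, -, hr₁⟩ :=
    Int.exists_eq_mul_add_two_mul_abs_le ((g - l • t₀) ⨯₃ b ⬝ᵥ t₀) hpos
  obtain ⟨q₂, r₂, h₂, -, hr₂⟩ :=
    Int.exists_eq_mul_add_two_mul_abs_le (a ⨯₃ (g - l • t₀) ⬝ᵥ t₀) hpos
  refine ⟨t₀ + q₁ • a + q₂ • b, ?_, ?_⟩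
  · have ha : a ⨯₃ b ⬝ᵥ a = 0 := by rw [dotProduct_comm, dot_self_cross]
    have hb : a ⨯₃ b ⬝ᵥ b = 0 := by rw [dotProduct_comm, dot_cross_self]
    rw [dotProduct_add, dotProduct_add, dotProduct_smul, dotProduct_smul, ht₀, ha, hb]
    simp
  · have hlt : l • (t₀ + q₁ • a + q₂ • b) = g - r₁ • a - r₂ • b := by
      rw [h₁, h₂] at hG
      linear_combination (norm := module) -hG
    have h := hN.sub_smul_le (g - r₁ • a) b r₂
    rw [← hlt, hN.smul_eq, abs_of_pos hpos] at h
    have h' := hN.sub_smul_le g a r₁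
    have hm := (hN.nonneg a).trans hNa
    have hl : l * N (t₀ + q₁ • a + q₂ • b) ≤ l * m := by
      nlinarith [hr₁ hg, hr₂ hg, hN.nonneg a, hN.nonneg b]
    exact le_of_mul_le_mul_left hl hpos

theorem exists_isPrimitive_cross_le (hN : IsIntSeminorm N)
    {a : Fin 3 → ℤ} {U : Matrix (Fin 3) (Fin 3) ℤ} {m : ℤ} (ha : IsPrimitive a)
    (hU : IsUnit U.det) (hNa : N a ≤ m) (hU₀ : N (U 0) ≤ m) (hU₁ : N (U 1) ≤ m) :
    ∃ b, IsPrimitive (a ⨯₃ b) ∧ N b ≤ m := by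
  obtain ⟨φ, hφ⟩ := isPrimitive_iff_exists_dotProduct_eq_one.1 ha
  rcases cross_row_ne_zero_of_isUnit_det hU hφ with h | h
  · exact hN.exists_isPrimitive_cross_le_of_cross_ne_zero ha h hNa hU₀
  · exact hN.exists_isPrimitive_cross_le_of_cross_ne_zero ha h hNa hU₁

theorem exists_cross_dotProduct_eq_one_le (hN : IsIntSeminorm N)
    {a b : Fin 3 → ℤ} {X : Matrix (Fin 3) (Fin 3) ℤ} {m : ℤ} (hab : IsPrimitive (a ⨯₃ b))
    (hX : IsUnit X.det) (hNa : N a ≤ m) (hNb : N b ≤ m) (hNX : ∀ i, N (X i) ≤ m) :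
    ∃ t, a ⨯₃ b ⬝ᵥ t = 1 ∧ N t ≤ m := by
  obtain ⟨i, hi⟩ := exists_odd_dotProduct_row_of_isUnit_det hX hab
  exact hN.exists_cross_dotProduct_eq_one_le_of_odd hab hi hNa hNb (hNX i)

end Fin3

end IsIntSeminorm

section LatticeWidth
variable {ι : Type*} [Fintype ι] (V : Finset (ι → ℤ)) (hV : V.Nonempty)

def latticeWidth (a : ι → ℤ) : ℤ := V.sup' hV (a ⬝ᵥ ·) - V.inf' hV (a ⬝ᵥ ·)

variable {V}

theorem abs_sub_le_latticeWidth (a : ι → ℤ) {v w : ι → ℤ} (hv : v ∈ V) (hw : w ∈ V) :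
    |a ⬝ᵥ v - a ⬝ᵥ w| ≤ latticeWidth V hV a := by
  have := Finset.le_sup' (a ⬝ᵥ ·) hv
  have := Finset.le_sup' (a ⬝ᵥ ·) hw
  have := Finset.inf'_le (a ⬝ᵥ ·) hv
  have := Finset.inf'_le (a ⬝ᵥ ·) hw
  rw [abs_sub_le_iff, latticeWidth]
  constructor <;> linarith

theorem exists_latticeWidth_eq (a : ι → ℤ) :
    ∃ v ∈ V, ∃ w ∈ V, latticeWidth V hV a = a ⬝ᵥ v - a ⬝ᵥ w := by
  obtain ⟨v, hv, hv'⟩ := Finset.exists_mem_eq_sup' hV (a ⬝ᵥ ·)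
  obtain ⟨w, hw, hw'⟩ := Finset.exists_mem_eq_inf' hV (a ⬝ᵥ ·)
  exact ⟨v, hv, w, hw, by rw [latticeWidth, hv', hw']⟩

theorem isIntSeminorm_latticeWidth : IsIntSeminorm (latticeWidth V hV) where
  add_le x y := by
    obtain ⟨v, hv, w, hw, h⟩ := exists_latticeWidth_eq hV (x + y)
    have hx := (le_abs_self _).trans (abs_sub_le_latticeWidth hV x hv hw)
    have hy := (le_abs_self _).trans (abs_sub_le_latticeWidth hV y hv hw)
    rw [h, add_dotProduct, add_dotProduct]
    linarith
  smul_eq k x := by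
    apply le_antisymm
    · obtain ⟨v, hv, w, hw, h⟩ := exists_latticeWidth_eq hV (k • x)
      rw [h, smul_dotProduct, smul_dotProduct, smul_eq_mul, smul_eq_mul, ← mul_sub]
      exact (le_abs_self _).trans (abs_mul k _ ▸
        mul_le_mul_of_nonneg_left (abs_sub_le_latticeWidth hV x hv hw) (abs_nonneg k))
    · obtain ⟨v, hv, w, hw, h⟩ := exists_latticeWidth_eq hV x
      have := abs_sub_le_latticeWidth hV (k • x) hv hw
      rw [smul_dotProduct, smul_dotProduct, smul_eq_mul, smul_eq_mul, ← mul_sub, abs_mul] at this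
      rw [h]
      exact (mul_le_mul_of_nonneg_left (le_abs_self _) (abs_nonneg k)).trans this

end LatticeWidth

section LatticePoly3
variable {V : Finset (Fin 3 → ℤ)} (hV : V.Nonempty)

theorem intCast_mem_latticePoly3 {v : Fin 3 → ℤ} (hv : v ∈ V) :
    (fun i => (v i : ℝ)) ∈ latticePoly3 V :=
  subset_convexHull ℝ _ (Set.mem_image_of_mem _ hv)

theorem sum_mul_intCast {ι : Type*} [Fintype ι] (a v : ι → ℤ) :
    ∑ i, (a i : ℝ) * (v i : ℝ) = ((a ⬝ᵥ v : ℤ) : ℝ) := by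
  push_cast [dotProduct]
  rfl

theorem sum_mul_mem_Icc_of_mem_latticePoly3 (a : Fin 3 → ℤ) {p : Fin 3 → ℝ}
    (hp : p ∈ latticePoly3 V) :
    ∑ i, (a i : ℝ) * p i ∈
      Set.Icc ((V.inf' hV (a ⬝ᵥ ·) : ℤ) : ℝ) ((V.sup' hV (a ⬝ᵥ ·) : ℤ) : ℝ) := by
  have hlin : IsLinearMap ℝ (fun p : Fin 3 → ℝ => ∑ i, (a i : ℝ) * p i) :=
    ⟨fun x y => by simp [mul_add, Finset.sum_add_distrib],
      fun c x => by simp [Finset.mul_sum, mul_left_comm]⟩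
  refine convexHull_min ?_ ((convex_Icc _ _).is_linear_preimage hlin) hp
  rintro _ ⟨v, hv, rfl⟩
  simp only [Set.mem_preimage, sum_mul_intCast, Set.mem_Icc, Int.cast_le]
  exact ⟨Finset.inf'_le _ hv, Finset.le_sup' (a ⬝ᵥ ·) hv⟩

theorem width3_latticePoly3 (a : Fin 3 → ℤ) :
    width3 (latticePoly3 V) a = latticeWidth V hV a := by
  have hmax : IsGreatest ((fun p => ∑ i, (a i : ℝ) * p i) '' latticePoly3 V)
      ((V.sup' hV (a ⬝ᵥ ·) : ℤ) : ℝ) := by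
    obtain ⟨v, hv, hv'⟩ := Finset.exists_mem_eq_sup' hV (a ⬝ᵥ ·)
    refine ⟨⟨_, intCast_mem_latticePoly3 hv, by simp only [sum_mul_intCast, hv']⟩, ?_⟩
    rintro _ ⟨p, hp, rfl⟩
    exact (sum_mul_mem_Icc_of_mem_latticePoly3 hV a hp).2
  have hmin : IsLeast ((fun p => ∑ i, (a i : ℝ) * p i) '' latticePoly3 V)
      ((V.inf' hV (a ⬝ᵥ ·) : ℤ) : ℝ) := by
    obtain ⟨v, hv, hv'⟩ := Finset.exists_mem_eq_inf' hV (a ⬝ᵥ ·)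
    refine ⟨⟨_, intCast_mem_latticePoly3 hv, by simp only [sum_mul_intCast, hv']⟩, ?_⟩
    rintro _ ⟨p, hp, rfl⟩
    exact (sum_mul_mem_Icc_of_mem_latticePoly3 hV a hp).1
  rw [width3, hmax.csSup_eq, hmin.csInf_eq, latticeWidth, Int.cast_sub]

theorem mem_widthSet3_latticePoly3_iff {x : ℝ} :
    x ∈ widthSet3 (latticePoly3 V) ↔ ∃ a, IsPrimitive a ∧ (latticeWidth V hV a : ℝ) = x := by
  simp only [widthSet3, Set.mem_ofPred_eq, isPrimitive_iff_int_gcd, width3_latticePoly3 hV]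

theorem exists_forall_mem_latticePoly3_mem_Icc_iff (a : Fin 3 → ℤ) (k : ℤ) :
    (∃ c : ℤ, ∀ p ∈ latticePoly3 V, ∑ i, (a i : ℝ) * p i + c ∈ Set.Icc (0 : ℝ) k) ↔
      latticeWidth V hV a ≤ k := by
  constructor
  · rintro ⟨c, hc⟩
    obtain ⟨v, hv, w, hw, h⟩ := exists_latticeWidth_eq hV a
    have hv' := (hc _ (intCast_mem_latticePoly3 hv)).2
    have hw' := (hc _ (intCast_mem_latticePoly3 hw)).1
    rw [sum_mul_intCast] at hv' hw'
    have hv'' : a ⬝ᵥ v + c ≤ k := by exact_mod_cast hv'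
    have hw'' : 0 ≤ a ⬝ᵥ w + c := by exact_mod_cast hw'
    omega
  · intro hk
    refine ⟨-V.inf' hV (a ⬝ᵥ ·), fun p hp => ?_⟩
    have := sum_mul_mem_Icc_of_mem_latticePoly3 hV a hp
    have hk' : ((latticeWidth V hV a : ℤ) : ℝ) ≤ k := by exact_mod_cast hk
    rw [latticeWidth, Int.cast_sub] at hk'
    push_cast
    constructor <;> linarith [this.1, this.2]

end LatticePoly3

section Fits
variable {P : Set (Fin 3 → ℝ)}

theorem FitsInBox3.mono {a b c a' b' c' : ℤ} (h : FitsInBox3 P a b c) (ha : a ≤ a') (hb : b ≤ b')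
    (hc : c ≤ c') : FitsInBox3 P a' b' c' := by
  obtain ⟨A, v, hA, hP⟩ := h
  have hI {x y : ℤ} (hxy : x ≤ y) : Set.Icc (0 : ℝ) x ⊆ Set.Icc 0 y :=
    Set.Icc_subset_Icc_right (Int.cast_le.2 hxy)
  exact ⟨A, v, hA, fun p hp => ⟨hI ha (hP p hp).1, hI hb (hP p hp).2.1, hI hc (hP p hp).2.2⟩⟩

theorem FitsInBox3.fitsInSlab3 {k c : ℤ} (h : FitsInBox3 P k k c) : FitsInSlab3 P k := by
  obtain ⟨A, v, hA, hP⟩ := h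
  exact ⟨A, v, hA, fun p hp => ⟨(hP p hp).1, (hP p hp).2.1⟩⟩

theorem fitsInCube3_iff_fitsInBox3 {l : ℤ} : FitsInCube3 P l ↔ FitsInBox3 P l l l := by
  refine exists₂_congr fun A v => and_congr_right fun _ => forall₂_congr fun p _ => ?_
  exact ⟨fun h => ⟨h 0, h 1, h 2⟩, fun h i => by fin_cases i; exacts [h.1, h.2.1, h.2.2]⟩

theorem mapIntCast_mulVec_add_apply (A : Matrix (Fin 3) (Fin 3) ℤ) (v : Fin 3 → ℤ)
    (p : Fin 3 → ℝ) (i : Fin 3) :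
    ((A.map (fun z : ℤ => (z : ℝ))).mulVec p + fun j => (v j : ℝ)) i =
      ∑ j, (A i j : ℝ) * p j + v i := by
  simp [Matrix.mulVec, dotProduct]

variable {V : Finset (Fin 3 → ℤ)} (hV : V.Nonempty)

theorem fitsInBox3_latticePoly3_iff {a b c : ℤ} :
    FitsInBox3 (latticePoly3 V) a b c ↔ ∃ A : Matrix (Fin 3) (Fin 3) ℤ, IsUnit A.det ∧
      latticeWidth V hV (A 0) ≤ a ∧ latticeWidth V hV (A 1) ≤ b ∧
      latticeWidth V hV (A 2) ≤ c := by
  simp only [← exists_forall_mem_latticePoly3_mem_Icc_iff hV]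
  constructor
  · rintro ⟨A, v, hA, hP⟩
    refine ⟨A, Int.isUnit_iff.2 hA, ⟨v 0, fun p hp => ?_⟩, ⟨v 1, fun p hp => ?_⟩,
      ⟨v 2, fun p hp => ?_⟩⟩ <;> simp only [← mapIntCast_mulVec_add_apply]
    exacts [(hP p hp).1, (hP p hp).2.1, (hP p hp).2.2]
  · rintro ⟨A, hA, ⟨c₀, h₀⟩, ⟨c₁, h₁⟩, ⟨c₂, h₂⟩⟩
    refine ⟨A, ![c₀, c₁, c₂], Int.isUnit_iff.1 hA, fun p hp => ?_⟩
    simp only [mapIntCast_mulVec_add_apply]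
    exact ⟨h₀ p hp, h₁ p hp, h₂ p hp⟩

theorem exists_latticeWidth_le_of_fitsInSlab3 {k : ℤ} (h : FitsInSlab3 (latticePoly3 V) k) :
    ∃ A : Matrix (Fin 3) (Fin 3) ℤ, IsUnit A.det ∧
      latticeWidth V hV (A 0) ≤ k ∧ latticeWidth V hV (A 1) ≤ k := by
  obtain ⟨A, v, hA, hP⟩ := h
  simp only [mapIntCast_mulVec_add_apply] at hP
  exact ⟨A, Int.isUnit_iff.2 hA,
    (exists_forall_mem_latticePoly3_mem_Icc_iff hV _ _).1 ⟨v 0, fun p hp => (hP p hp).1⟩,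
    (exists_forall_mem_latticePoly3_mem_Icc_iff hV _ _).1 ⟨v 1, fun p hp => (hP p hp).2⟩⟩

end Fits

/-- The set of triples `(a,b,c)` such that some affine unimodular image of `P` lies in
`[0,a] × [0,b] × [0,c]` has a minimum (for the product order) at
`(w(P), w₂(P), ls_□(P))`: (1) `P` fits unimodularly in
`[0, w(P)] × [0, w₂(P)] × [0, ls_□(P)]`, and (2) whenever `P` fits unimodularly in
`[0,a] × [0,b] × [0,c]` with `a ≤ b ≤ c`, we have `w(P) ≤ a`, `w₂(P) ≤ b` and
`ls_□(P) ≤ c`. -/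
theorem fitsInBox3_min (V : Finset (Fin 3 → ℤ)) (hV : V.Nonempty)
    (P : Set (Fin 3 → ℝ)) (hP : P = latticePoly3 V) (w w₂ ls : ℤ)
    (hw : IsLeast (widthSet3 P) (w : ℝ))
    (hw₂ : IsLeast {k : ℤ | FitsInSlab3 P k} w₂)
    (hls : IsLeast {k : ℤ | FitsInCube3 P k} ls) :
    FitsInBox3 P w w₂ ls ∧
      ∀ a b c : ℤ, a ≤ b → b ≤ c → FitsInBox3 P a b c → w ≤ a ∧ w₂ ≤ b ∧ ls ≤ c := by
  subst hP
  have hN := isIntSeminorm_latticeWidth hV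
  have hw_le {A : Matrix (Fin 3) (Fin 3) ℤ} (hA : IsUnit A.det) : w ≤ latticeWidth V hV (A 0) :=
    Int.cast_le.1 <| hw.2 <| (mem_widthSet3_latticePoly3_iff hV).2
      ⟨A 0, isPrimitive_row_of_isUnit_det hA 0, rfl⟩
  have hls_box := fitsInCube3_iff_fitsInBox3.1 hls.1
  refine ⟨?_, fun a b c hab hbc hbox => ?_⟩
  · obtain ⟨a₀, ha₀, hwa₀⟩ := (mem_widthSet3_latticePoly3_iff hV).1 hw.1
    obtain ⟨U, hU, hU₀, hU₁⟩ := exists_latticeWidth_le_of_fitsInSlab3 hV hw₂.1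
    obtain ⟨X, hX, hX₀, hX₁, hX₂⟩ := (fitsInBox3_latticePoly3_iff hV).1 hls_box
    have hwa₀ : latticeWidth V hV a₀ = w := Int.cast_inj.1 hwa₀
    have hww₂ : w ≤ w₂ := (hw_le hU).trans hU₀
    have hw₂ls : w₂ ≤ ls := hw₂.2 hls_box.fitsInSlab3
    obtain ⟨b, hb, hNb⟩ := hN.exists_isPrimitive_cross_le ha₀ hU (hwa₀.trans_le hww₂) hU₀ hU₁
    obtain ⟨t, ht, hNt⟩ := hN.exists_cross_dotProduct_eq_one_le hb hX
      (hwa₀.trans_le (hww₂.trans hw₂ls)) (hNb.trans hw₂ls)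
      (fun i => by fin_cases i; exacts [hX₀, hX₁, hX₂])
    refine (fitsInBox3_latticePoly3_iff hV).2 ⟨![a₀, b, t], ?_, hwa₀.le, hNb, hNt⟩
    rw [← triple_product_eq_det, ← cross_dotProduct, ht]
    exact isUnit_one
  · obtain ⟨A, hA, hA₀, -, -⟩ := (fitsInBox3_latticePoly3_iff hV).1 hbox
    exact ⟨(hw_le hA).trans hA₀, hw₂.2 (hbox.mono hab le_rfl le_rfl).fitsInSlab3,
      hls.2 (fitsInCube3_iff_fitsInBox3.2 (hbox.mono (hab.trans hbc) hbc le_rfl))⟩
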